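/- Let Γ be a preGarside trickle graph. Then the preGarside trickle monoid Tr⁺(Γ) is a Garside monoid if and only if V(Γ) is finite and Γ is a complete graph. -/

import Mathlib

open scoped Classical

universe u

namespace SimpleGraph

/-- `y` belongs to the star of `x` in `G` (i.e. `y = x` or `y` is a neighbour of `x`). -/
def InStar {V : Type u} (G : SimpleGraph V) (x y : V) : Prop := y = x ∨ G.Adj x y

end SimpleGraph

/-- A **trickle graph**: a simplicial graph together with a partial order on the vertices,
a vertex labeling `mu` with values in `ℕ≥2 ∪ {∞}`, and, for every vertex `x`, an automorphism
`phi x` of the star of `x` (encoded as a permutation of the whole vertex set fixing every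
vertex outside of the star of `x`), subject to conditions (a)–(g) of Bellingeri–Chemin–Paris. -/
structure TrickleGraph (V : Type u) [PartialOrder V] where
  /-- the underlying simplicial graph -/
  graph : SimpleGraph V
  /-- the vertex labeling, with `⊤` playing the role of `∞` -/
  mu : V → ℕ∞
  /-- the automorphism of the star of each vertex, extended by the identity -/
  phi : V → Equiv.Perm V
  two_le_mu : ∀ x : V, 2 ≤ mu x
  /-- condition (a) -/
  adj_of_lt : ∀ x y : V, x < y → graph.Adj x y
  /-- `phi x` is supported on the star of `x` -/
  phi_apply_of_not_inStar : ∀ x y : V, ¬ graph.InStar x y → phi x y = y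
  /-- `phi x` maps the star of `x` to itself -/
  inStar_phi : ∀ x y : V, graph.InStar x y → graph.InStar x (phi x y)
  /-- `phi x` is a graph automorphism of the (full subgraph spanned by the) star of `x` -/
  adj_phi_iff : ∀ x y z : V, graph.InStar x y → graph.InStar x z →
      (graph.Adj (phi x y) (phi x z) ↔ graph.Adj y z)
  /-- condition (b) -/
  adj_incomp : ∀ x y z : V, graph.Adj x y → ¬ x ≤ y → ¬ y ≤ x → z ≤ y →
      graph.Adj x z ∧ ¬ x ≤ z ∧ ¬ z ≤ x
  /-- condition (c) -/
  le_phi_iff : ∀ x y z : V, graph.InStar x y → graph.InStar x z →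
      (phi x z ≤ phi x y ↔ z ≤ y)
  /-- condition (d) -/
  lt_of_phi_ne : ∀ x y : V, graph.InStar x y → phi x y ≠ y → y < x
  /-- condition (e): if `mu x` is finite then the order of `phi x` divides `mu x` -/
  phi_pow_mu : ∀ x : V, phi x ^ WithTop.untopD 0 (mu x) = 1
  /-- condition (f) -/
  mu_phi : ∀ x y : V, graph.InStar x y → mu (phi x y) = mu y
  /-- condition (g) -/
  phi_phi : ∀ x y z : V, z < y → y < x →
      phi x (phi y z) = phi (phi x y) (phi x z)

namespace TrickleGraph

variable {V : Type u} [PartialOrder V]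

/-- The set of defining relators of the trickle group: `x ^ (mu x)` whenever `mu x ≠ ∞`, and
`phi_x(y) · x · (phi_y(x) · y)⁻¹` for every edge `{x, y}`. -/
def rels (T : TrickleGraph V) : Set (FreeGroup V) :=
  {r | ∃ (x : V) (n : ℕ), T.mu x = (n : ℕ∞) ∧ r = FreeGroup.of x ^ n} ∪
  {r | ∃ x y : V, T.graph.Adj x y ∧
      r = FreeGroup.of (T.phi x y) * FreeGroup.of x *
          (FreeGroup.of (T.phi y x) * FreeGroup.of y)⁻¹}

end TrickleGraph

/-- The **trickle group** of a trickle graph. -/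
abbrev TrickleGroup {V : Type u} [PartialOrder V] (T : TrickleGraph V) : Type u :=
  PresentedGroup T.rels

namespace TrickleGraph

variable {V : Type u} [PartialOrder V]

/-- The image of a vertex in the trickle group. -/
def gen (T : TrickleGraph V) (x : V) : TrickleGroup T := PresentedGroup.of x

/-- `mu` converted to a natural number, with `∞` mapped to `0` (so that `ZMod (T.muNat x)`
is the group `ℤ_{mu x}` of the paper, `ZMod 0 = ℤ` corresponding to `mu x = ∞`). -/
def muNat (T : TrickleGraph V) (x : V) : ℕ := WithTop.untopD 0 (T.mu x)

/-- The power `phi_x^a` for an exponent `a ∈ ℤ_{mu x}`; it is well defined on representatives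
by condition (e). -/
def phiPow (T : TrickleGraph V) (x : V) (a : ZMod (T.muNat x)) : Equiv.Perm V :=
  T.phi x ^ (ZMod.cast a : ℤ)

theorem mu_phi_apply (T : TrickleGraph V) (x y : V) : T.mu (T.phi x y) = T.mu y := by
  by_cases h : T.graph.InStar x y
  · exact T.mu_phi x y h
  · rw [T.phi_apply_of_not_inStar x y h]

theorem mu_phi_zpow (T : TrickleGraph V) (x : V) :
    ∀ (n : ℤ) (y : V), T.mu ((T.phi x ^ n) y) = T.mu y := by
  have hinv : ∀ y : V, T.mu ((T.phi x)⁻¹ y) = T.mu y := by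
    intro y
    conv_rhs => rw [← Equiv.apply_symm_apply (T.phi x) y]
    exact (T.mu_phi_apply x ((T.phi x)⁻¹ y)).symm
  intro n
  induction n using Int.induction_on with
  | zero => intro y; simp
  | succ k ih =>
      intro y
      have h : (T.phi x ^ ((k : ℤ) + 1)) y = (T.phi x ^ (k : ℤ)) (T.phi x y) := by
        rw [zpow_add_one]; rfl
      rw [h, ih (T.phi x y), T.mu_phi_apply]
  | pred k ih =>
      intro y
      have h : (T.phi x ^ (-(k : ℤ) - 1)) y = (T.phi x ^ (-(k : ℤ))) ((T.phi x)⁻¹ y) := by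
        rw [zpow_sub_one]; rfl
      rw [h, ih ((T.phi x)⁻¹ y), hinv]

theorem mu_phiPow (T : TrickleGraph V) (x : V) (a : ZMod (T.muNat x)) (y : V) :
    T.mu ((T.phiPow x a) y) = T.mu y :=
  T.mu_phi_zpow x _ y

theorem muNat_phiPow (T : TrickleGraph V) (x : V) (a : ZMod (T.muNat x)) (y : V) :
    T.muNat ((T.phiPow x a) y) = T.muNat y :=
  congrArg (fun m : ℕ∞ => WithTop.untopD 0 m) (T.mu_phiPow x a y)

end TrickleGraph

/-- Transport of a `ZMod` element along an equality of moduli. -/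
def zmodCongr {m k : ℕ} (h : m = k) (a : ZMod m) : ZMod k := by subst h; exact a

theorem zmodCongr_ne_zero {m k : ℕ} (h : m = k) {a : ZMod m} (ha : a ≠ 0) :
    zmodCongr h a ≠ 0 := by subst h; exact ha

/-- A **syllable** `x^a`, where `x` is a vertex and `a ∈ ℤ_{mu x} \ {0}`. -/
def Syllable {V : Type u} [PartialOrder V] (T : TrickleGraph V) : Type u :=
  Σ x : V, {a : ZMod (T.muNat x) // a ≠ 0}

namespace Syllable

variable {V : Type u} [PartialOrder V] {T : TrickleGraph V}

/-- The element of the trickle group represented by a syllable. -/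
def elm (s : Syllable T) : TrickleGroup T :=
  (PresentedGroup.of s.1 : TrickleGroup T) ^ (ZMod.cast s.2.val : ℤ)

end Syllable

/-- Syllabic words. -/
abbrev SylWord {V : Type u} [PartialOrder V] (T : TrickleGraph V) := List (Syllable T)

/-- The element of the trickle group represented by a syllabic word. -/
def SylWord.eval {V : Type u} [PartialOrder V] {T : TrickleGraph V} (w : SylWord T) :
    TrickleGroup T :=
  (w.map Syllable.elm).prod

/-- The defining relations of the **preGarside trickle monoid** `Tr⁺(Γ)`:
`phi_x(y) · x = phi_y(x) · y` for every edge `{x, y}`. -/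
def TrickleGraph.monRels {V : Type u} [PartialOrder V] (T : TrickleGraph V) :
    FreeMonoid V → FreeMonoid V → Prop := fun u v =>
  ∃ x y : V, T.graph.Adj x y ∧
    u = FreeMonoid.of (T.phi x y) * FreeMonoid.of x ∧
    v = FreeMonoid.of (T.phi y x) * FreeMonoid.of y

/-- The **preGarside trickle monoid** `Tr⁺(Γ)` of a (preGarside) trickle graph. -/
abbrev TrickleMonoid {V : Type u} [PartialOrder V] (T : TrickleGraph V) : Type u :=
  PresentedMonoid T.monRels

section PreGarside

variable {M : Type*} [Monoid M]

/-- Left divisibility: `a ≤_L b` iff `a c = b` for some `c`. -/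
def DvdL (a b : M) : Prop := ∃ c, a * c = b

/-- Right divisibility: `a ≤_R b` iff `c a = b` for some `c`. -/
def DvdR (a b : M) : Prop := ∃ c, c * a = b

/-- `m` is the least common upper bound of `a` and `b` for left divisibility. -/
def IsLcmL (a b m : M) : Prop :=
  (DvdL a m ∧ DvdL b m) ∧ ∀ c, DvdL a c → DvdL b c → DvdL m c

/-- `m` is the least common upper bound of `a` and `b` for right divisibility. -/
def IsLcmR (a b m : M) : Prop :=
  (DvdR a m ∧ DvdR b m) ∧ ∀ c, DvdR a c → DvdR b c → DvdR m c

/-- A **preGarside monoid**: a cancellative atomic monoid in which any two elements admitting a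
common upper bound for left (resp. right) divisibility admit a least one. -/
def IsPreGarsideMonoid (M : Type*) [Monoid M] : Prop :=
  (∀ a b c d : M, c * a * d = c * b * d → a = b) ∧
  (∃ ν : M → ℕ, (∀ a : M, ν a = 0 ↔ a = 1) ∧ ∀ a b : M, ν a + ν b ≤ ν (a * b)) ∧
  (∀ a b : M, (∃ c, DvdL a c ∧ DvdL b c) → ∃ m, IsLcmL a b m) ∧
  (∀ a b : M, (∃ c, DvdR a c ∧ DvdR b c) → ∃ m, IsLcmR a b m)

/-- A **Garside element**: a balanced element whose set of divisors generates the monoid. -/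
def IsGarsideElement (Δ : M) : Prop :=
  {a : M | DvdL a Δ} = {a : M | DvdR a Δ} ∧ Submonoid.closure {a : M | DvdL a Δ} = ⊤

/-- A **Garside monoid**: a preGarside monoid containing a Garside element. -/
def IsGarsideMonoid (M : Type*) [Monoid M] : Prop :=
  IsPreGarsideMonoid M ∧ ∃ Δ : M, IsGarsideElement Δ

/-- A **special** submonoid: closed under taking factors. -/
def Submonoid.IsSpecial (N : Submonoid M) : Prop := ∀ a b : M, a * b ∈ N → a ∈ N ∧ b ∈ N

/-- A **parabolic submonoid** of a (preGarside) monoid: a special submonoid closed under the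
least common upper bounds `∨_L` and `∨_R` whenever they exist. -/
def Submonoid.IsParabolic (N : Submonoid M) : Prop :=
  N.IsSpecial ∧
  (∀ a b m : M, a ∈ N → b ∈ N → IsLcmL a b m → m ∈ N) ∧
  (∀ a b m : M, a ∈ N → b ∈ N → IsLcmR a b m → m ∈ N)

end PreGarside

/-- Relators defining the **enveloping group** of a monoid `M`: the enveloping group is
generated by the elements of `M` subject to the relations `of (a b) = of a · of b`. -/
def envRels (M : Type u) [Monoid M] : Set (FreeGroup M) :=
  {r | ∃ a b : M, r = FreeGroup.of (a * b) * (FreeGroup.of a * FreeGroup.of b)⁻¹}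

/-- The **enveloping group** `G(M)` of a monoid `M`. -/
abbrev EnvGroup (M : Type u) [Monoid M] : Type u := PresentedGroup (envRels M)

/-- The natural map `M → G(M)`. -/
def envOf (M : Type u) [Monoid M] (a : M) : EnvGroup M := PresentedGroup.of a

/-!
Write `ρ(x, y) = φ_x⁻¹(y)`, so that `Tr⁺(Γ)` is presented by the relations
`x ρ(x,y) = y ρ(y,x)` for adjacent `x, y`. Conditions (b) and (g) give the cube identity
`ρ(ρ(x,z), ρ(x,y)) = ρ(ρ(z,x), ρ(z,y))`, and with it a Levi lemma: if `x c = y d` with `x ≠ y`,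
then `x` and `y` are adjacent and `c = ρ(x,y) e`, `d = ρ(y,x) e` for some `e`. Hence `Tr⁺(Γ)` is
left cancellative, and also right cancellative because its opposite is the trickle monoid of
the graph with automorphisms `φ_x⁻¹`.

If `Δ` is a Garside element, every letter divides `Δ`, since letters are atoms and `Div(Δ)`
generates; the Levi lemma then forces any two letters to be adjacent, and shows that an
element of length `n` has at most `n` distinct letters as left divisors, so `V` is finite.
Conversely, for a complete graph the Levi lemma yields the lcm of a letter with any element,
hence all lcms, and the lcm `Δ` of the finitely many letters satisfies `Δ ≤_L x Δ` for every
letter `x`. This makes every right divisor of `Δ` a left divisor, and the finitely many left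
divisors are in bijection with the right divisors by cancellation, so `Δ` is balanced.
-/

section Divisibility

variable {M : Type*} [Monoid M]

theorem dvdL_refl (a : M) : DvdL a a := ⟨1, mul_one a⟩

theorem one_dvdL (a : M) : DvdL 1 a := ⟨a, one_mul a⟩

theorem dvdL_mul_right (a b : M) : DvdL a (a * b) := ⟨b, rfl⟩

theorem DvdL.trans {a b c : M} : DvdL a b → DvdL b c → DvdL a c := by
  rintro ⟨u, rfl⟩ ⟨v, rfl⟩
  exact ⟨u * v, (mul_assoc a u v).symm⟩

theorem DvdL.mul_left {b c : M} (h : DvdL b c) (a : M) : DvdL (a * b) (a * c) := by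
  obtain ⟨u, rfl⟩ := h
  exact ⟨u, mul_assoc a b u⟩

theorem isLcmL_one_left (b : M) : IsLcmL 1 b b :=
  ⟨⟨one_dvdL b, dvdL_refl b⟩, fun _ _ hc => hc⟩

theorem IsLcmL.mul_left [IsLeftCancelMul M] {s a b b' l : M} (hs : IsLcmL s b (s * b'))
    (hl : IsLcmL a b' l) : IsLcmL (s * a) b (s * l) := by
  refine ⟨⟨hl.1.1.mul_left s, hs.1.2.trans (hl.1.2.mul_left s)⟩, fun c hac hbc => ?_⟩
  obtain ⟨k, hk⟩ := hs.2 c ((dvdL_mul_right s a).trans hac) hbc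
  obtain ⟨j, hj⟩ := hac
  have hab : a * j = b' * k := mul_left_cancel (by rw [← mul_assoc, hj, ← hk, mul_assoc])
  obtain ⟨f, hf⟩ := hl.2 (b' * k) ⟨j, hab⟩ (dvdL_mul_right b' k)
  exact ⟨f, by rw [mul_assoc, hf, ← mul_assoc, hk]⟩

theorem exists_isLcmL_of_closure_eq_top [IsLeftCancelMul M] {S : Set M}
    (hS : Submonoid.closure S = ⊤) (hlcm : ∀ s ∈ S, ∀ b : M, ∃ m, IsLcmL s b m)
    (a b : M) : ∃ m, IsLcmL a b m := by
  induction a using Submonoid.induction_of_closure_eq_top_left hS generalizing b with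
  | one => exact ⟨b, isLcmL_one_left b⟩
  | mul_left s hs a ih =>
    obtain ⟨m, hm⟩ := hlcm s hs b
    obtain ⟨b', rfl⟩ := hm.1.1
    obtain ⟨l, hl⟩ := ih b'
    exact ⟨s * l, hm.mul_left hl⟩

theorem exists_isLcmL_of_finite (hlcm : ∀ a b : M, ∃ m, IsLcmL a b m) {S : Set M}
    (hS : S.Finite) :
    ∃ Δ : M, (∀ s ∈ S, DvdL s Δ) ∧ ∀ c, (∀ s ∈ S, DvdL s c) → DvdL Δ c := by
  induction S, hS using Set.Finite.induction_on with
  | empty => exact ⟨1, by simp, fun c _ => one_dvdL c⟩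
  | @insert a S _ _ ih =>
    obtain ⟨D, hD, hDleast⟩ := ih
    obtain ⟨m, hm⟩ := hlcm a D
    refine ⟨m, ?_, fun c hc => hm.2 c (hc a (Set.mem_insert a S))
      (hDleast c fun s hs => hc s (Set.mem_insert_of_mem a hs))⟩
    rintro s (rfl | hs)
    exacts [hm.1.1, (hD s hs).trans hm.1.2]

theorem mem_of_mem_closure_of_atom {S : Set M} {a : M} (ha : a ≠ 1)
    (hatom : ∀ b c : M, b * c = a → b = 1 ∨ c = 1) (h : a ∈ Submonoid.closure S) :
    a ∈ S := by
  suffices ∀ m ∈ Submonoid.closure S, m = a → a ∈ S from this a h rfl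
  intro m hm
  induction hm using Submonoid.closure_induction_left with
  | one => exact fun h1 => absurd h1.symm ha
  | mul_left s hs m _ ih =>
    intro hsm
    rcases hatom s m hsm with rfl | rfl
    · exact ih (by rwa [one_mul] at hsm)
    · rw [mul_one] at hsm
      exact hsm ▸ hs

theorem dvdL_of_dvdR_of_closure_eq_top [IsLeftCancelMul M] {S : Set M}
    (hS : Submonoid.closure S = ⊤) {Δ : M} (hΔ : ∀ s ∈ S, DvdL Δ (s * Δ)) {a : M}
    (ha : DvdR a Δ) : DvdL a Δ := by
  obtain ⟨c, hc⟩ := ha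
  suffices ∀ c a : M, DvdL (c * a) Δ → DvdL a Δ from this c a ⟨1, by rw [mul_one, hc]⟩
  intro c
  induction c using Submonoid.induction_of_closure_eq_top_left hS with
  | one => simp
  | mul_left s hs c ih =>
    rintro a ⟨d, hd⟩
    obtain ⟨e, he⟩ := hΔ s hs
    refine ih a ⟨d * e, mul_left_cancel (a := s) ?_⟩
    rw [← he, ← hd]
    simp only [mul_assoc]

theorem setOf_dvdL_eq_setOf_dvdR [IsRightCancelMul M] {Δ : M} (hfin : {a | DvdL a Δ}.Finite)
    (hRL : {a | DvdR a Δ} ⊆ {a | DvdL a Δ}) : {a | DvdL a Δ} = {a | DvdR a Δ} := by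
  choose! f hf using fun a (h : DvdL a Δ) => h
  have hinj : Set.InjOn f {a | DvdL a Δ} := fun a ha b hb hab =>
    mul_right_cancel ((hf a ha).trans (hab ▸ hf b hb).symm)
  have hcard := Set.ncard_le_ncard_of_injOn f (fun a ha => (⟨a, hf a ha⟩ : DvdR (f a) Δ)) hinj
    (hfin.subset hRL)
  exact (Set.eq_of_subset_of_ncard_le hRL hcard hfin).symm

end Divisibility

section AntiEquiv

variable {M N : Type*} [Monoid M] [Monoid N]

theorem dvdR_iff_of_mulEquiv_mulOpposite (e : M ≃* Nᵐᵒᵖ) {a b : M} :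
    DvdR a b ↔ DvdL (e a).unop (e b).unop := by
  constructor
  · rintro ⟨c, rfl⟩
    exact ⟨(e c).unop, by rw [map_mul, MulOpposite.unop_mul]⟩
  · rintro ⟨c, hc⟩
    refine ⟨e.symm (MulOpposite.op c), e.injective ?_⟩
    rw [map_mul, MulEquiv.apply_symm_apply, ← MulOpposite.unop_inj, MulOpposite.unop_mul,
      MulOpposite.unop_op, hc]

theorem exists_isLcmR_of_mulEquiv_mulOpposite (e : M ≃* Nᵐᵒᵖ)
    (hlcm : ∀ a b : N, ∃ m, IsLcmL a b m) (a b : M) : ∃ m, IsLcmR a b m := by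
  obtain ⟨l, hl⟩ := hlcm (e a).unop (e b).unop
  refine ⟨e.symm (MulOpposite.op l), ?_⟩
  have key : ∀ x : M, DvdR x (e.symm (MulOpposite.op l)) ↔ DvdL (e x).unop l := fun x => by
    rw [dvdR_iff_of_mulEquiv_mulOpposite e, MulEquiv.apply_symm_apply, MulOpposite.unop_op]
  refine ⟨⟨(key a).2 hl.1.1, (key b).2 hl.1.2⟩, fun c hac hbc => ?_⟩
  have := hl.2 (e c).unop ((dvdR_iff_of_mulEquiv_mulOpposite e).1 hac)
    ((dvdR_iff_of_mulEquiv_mulOpposite e).1 hbc)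
  rwa [dvdR_iff_of_mulEquiv_mulOpposite e, MulEquiv.apply_symm_apply, MulOpposite.unop_op]

end AntiEquiv

namespace TrickleGraph

variable {V : Type u} [PartialOrder V] (T : TrickleGraph V)

theorem inStar_self (x : V) : T.graph.InStar x x := Or.inl rfl

theorem inStar_of_lt {x y : V} (h : y < x) : T.graph.InStar x y :=
  Or.inr (T.adj_of_lt y x h).symm

theorem phi_apply_of_not_lt {x y : V} (h : ¬ y < x) : T.phi x y = y := by
  by_cases hs : T.graph.InStar x y
  · exact not_imp_comm.1 (T.lt_of_phi_ne x y hs) h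
  · exact T.phi_apply_of_not_inStar x y hs

theorem phi_self (x : V) : T.phi x x = x := T.phi_apply_of_not_lt (lt_irrefl x)

theorem phi_lt_phi_iff {x y z : V} (hy : T.graph.InStar x y) (hz : T.graph.InStar x z) :
    T.phi x z < T.phi x y ↔ z < y := by
  rw [lt_iff_le_not_ge, lt_iff_le_not_ge, T.le_phi_iff x y z hy hz, T.le_phi_iff x z y hz hy]

theorem phi_lt_iff {x y : V} (hy : T.graph.InStar x y) : T.phi x y < x ↔ y < x := by
  simpa [T.phi_self] using T.phi_lt_phi_iff (T.inStar_self x) hy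

/-- In terms of `ρ(x, y) = φ_x⁻¹(y)` the defining relations read `x ρ(x,y) = y ρ(y,x)`. -/
def rho (x y : V) : V := (T.phi x)⁻¹ y

@[simp]
theorem phi_rho (x y : V) : T.phi x (T.rho x y) = y := Equiv.apply_symm_apply _ _

@[simp]
theorem rho_phi (x y : V) : T.rho x (T.phi x y) = y := Equiv.symm_apply_apply _ _

theorem rho_injective (x : V) : Function.Injective (T.rho x) := (T.phi x).symm.injective

theorem rho_apply_of_not_lt {x y : V} (h : ¬ y < x) : T.rho x y = y := by
  conv_lhs => rw [← T.phi_apply_of_not_lt h]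
  exact T.rho_phi x y

theorem rho_self (x : V) : T.rho x x = x := T.rho_apply_of_not_lt (lt_irrefl x)

theorem inStar_rho {x y : V} (h : T.graph.InStar x y) : T.graph.InStar x (T.rho x y) := by
  by_contra hs
  have := T.phi_apply_of_not_inStar x _ hs
  rw [phi_rho] at this
  exact hs (this ▸ h)

theorem adj_rho_iff {x y z : V} (hy : T.graph.InStar x y) (hz : T.graph.InStar x z) :
    T.graph.Adj (T.rho x y) (T.rho x z) ↔ T.graph.Adj y z := by
  simpa using (T.adj_phi_iff x _ _ (T.inStar_rho hy) (T.inStar_rho hz)).symm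

theorem rho_lt_rho_iff {x y z : V} (hy : T.graph.InStar x y) (hz : T.graph.InStar x z) :
    T.rho x z < T.rho x y ↔ z < y := by
  simpa using (T.phi_lt_phi_iff (T.inStar_rho hy) (T.inStar_rho hz)).symm

theorem rho_lt_iff {x y : V} (hy : T.graph.InStar x y) : T.rho x y < x ↔ y < x := by
  simpa using (T.phi_lt_iff (T.inStar_rho hy)).symm

theorem lt_rho_iff {x y : V} (hy : T.graph.InStar x y) : x < T.rho x y ↔ x < y := by
  simpa [T.rho_self] using T.rho_lt_rho_iff hy (T.inStar_self x)

/-- Condition (g) holds for every `z`, not only for `z < y`. -/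
theorem phi_mul_phi_of_lt {x y : V} (h : y < x) :
    T.phi x * T.phi y = T.phi (T.phi x y) * T.phi x := by
  ext w
  by_cases hw : w < y
  · exact T.phi_phi x y w hw h
  · have hxy : T.phi x y < x := (T.phi_lt_iff (T.inStar_of_lt h)).2 h
    have hfix : ¬ T.phi x w < T.phi x y := by
      by_cases hws : T.graph.InStar x w
      · rwa [T.phi_lt_phi_iff (T.inStar_of_lt h) hws]
      · rw [T.phi_apply_of_not_inStar x w hws]
        exact fun hc => hws (T.inStar_of_lt (hc.trans hxy))
    simp [T.phi_apply_of_not_lt hw, T.phi_apply_of_not_lt hfix]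

/-- By condition (b), `φ_x` fixes everything below `z` and `φ_z` everything below `x`. -/
theorem phi_mul_phi_comm_of_incomp {x z : V} (hadj : T.graph.Adj x z) (hxz : ¬ x ≤ z)
    (hzx : ¬ z ≤ x) : T.phi x * T.phi z = T.phi z * T.phi x := by
  have fix {a b : V} (hab : T.graph.Adj a b) (h1 : ¬ a ≤ b) (h2 : ¬ b ≤ a) {w : V}
      (hw : w ≤ b) : T.phi a w = w := by
    obtain ⟨-, -, h⟩ := T.adj_incomp a b w hab h1 h2 hw
    exact T.phi_apply_of_not_lt fun hc => h hc.le
  have below {a w : V} (hw : w < a) : T.phi a w < a := (T.phi_lt_iff (T.inStar_of_lt hw)).2 hw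
  ext w
  simp only [Equiv.Perm.coe_mul, Function.comp_apply]
  by_cases hwz : w < z
  · rw [fix hadj hxz hzx hwz.le, fix hadj hxz hzx (below hwz).le]
  by_cases hwx : w < x
  · rw [fix hadj.symm hzx hxz hwx.le, fix hadj.symm hzx hxz (below hwx).le]
  · rw [T.phi_apply_of_not_lt hwz, T.phi_apply_of_not_lt hwx, T.phi_apply_of_not_lt hwz]

theorem phi_mul_phi_rho {x z : V} (hadj : T.graph.Adj x z) :
    T.phi x * T.phi (T.rho x z) = T.phi z * T.phi (T.rho z x) := by
  by_cases hxz : x < z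
  · rw [T.rho_apply_of_not_lt (asymm hxz)]
    conv_lhs => rw [← T.phi_rho z x]
    rw [← T.phi_mul_phi_of_lt ((T.rho_lt_iff (T.inStar_of_lt hxz)).2 hxz)]
  by_cases hzx : z < x
  · rw [T.rho_apply_of_not_lt (asymm hzx),
      T.phi_mul_phi_of_lt ((T.rho_lt_iff (T.inStar_of_lt hzx)).2 hzx), phi_rho]
  rw [T.rho_apply_of_not_lt hzx, T.rho_apply_of_not_lt hxz]
  exact T.phi_mul_phi_comm_of_incomp hadj (fun h => hxz (h.lt_of_ne hadj.ne))
    (fun h => hzx (h.lt_of_ne hadj.ne'))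

theorem rho_rho_comm {x z : V} (hadj : T.graph.Adj x z) (y : V) :
    T.rho (T.rho x z) (T.rho x y) = T.rho (T.rho z x) (T.rho z y) := by
  have := congrArg (fun f : Equiv.Perm V => f⁻¹ y) (T.phi_mul_phi_rho hadj)
  simp only [mul_inv_rev, Equiv.Perm.coe_mul, Function.comp_apply] at this
  exact this

theorem le_rho_iff {x y z : V} (hy : T.graph.InStar x y) (hz : T.graph.InStar x z) :
    T.rho x z ≤ T.rho x y ↔ z ≤ y := by
  simpa using (T.le_phi_iff x _ _ (T.inStar_rho hy) (T.inStar_rho hz)).symm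

/-- Its trickle monoid is the opposite of that of `T`. -/
def op : TrickleGraph V where
  graph := T.graph
  mu := T.mu
  phi x := (T.phi x)⁻¹
  two_le_mu := T.two_le_mu
  adj_of_lt := T.adj_of_lt
  phi_apply_of_not_inStar _ _ h := T.rho_apply_of_not_lt fun hc => h (T.inStar_of_lt hc)
  inStar_phi _ _ := T.inStar_rho
  adj_phi_iff _ _ _ := T.adj_rho_iff
  adj_incomp := T.adj_incomp
  le_phi_iff _ _ _ := T.le_rho_iff
  lt_of_phi_ne _ _ _ h := by_contra fun hc => h (T.rho_apply_of_not_lt hc)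
  phi_pow_mu x := by rw [inv_pow, T.phi_pow_mu, inv_one]
  mu_phi x y _ := by simpa using T.mu_phi_zpow x (-1) y
  phi_phi x y z _ hyx := by
    have h := T.phi_mul_phi_of_lt ((T.rho_lt_iff (T.inStar_of_lt hyx)).2 hyx)
    rw [phi_rho] at h
    have := congrArg (fun f : Equiv.Perm V => f⁻¹ z) h
    simp only [mul_inv_rev, Equiv.Perm.coe_mul, Function.comp_apply] at this
    exact this.symm

theorem phi_phi_self (x y : V) : T.phi (T.phi x y) x = T.phi y x := by
  by_cases hyx : y < x
  · rw [T.phi_apply_of_not_lt (asymm hyx), T.phi_apply_of_not_lt]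
    exact asymm ((T.phi_lt_iff (T.inStar_of_lt hyx)).2 hyx)
  · rw [T.phi_apply_of_not_lt hyx]

theorem rho_phi_phi (x y : V) : T.rho (T.phi x y) (T.phi y x) = x := by
  rw [← T.phi_phi_self x y, rho_phi]

theorem adj_phi_phi {x y : V} (hadj : T.graph.Adj x y) :
    T.graph.Adj (T.phi x y) (T.phi y x) := by
  by_cases hyx : y < x
  · rw [T.phi_apply_of_not_lt (asymm hyx)]
    simpa [T.phi_self] using (T.adj_phi_iff x y x (Or.inr hadj) (T.inStar_self x)).2 hadj.symm
  · rw [T.phi_apply_of_not_lt hyx]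
    simpa [T.phi_self] using (T.adj_phi_iff y y x (T.inStar_self y) (Or.inr hadj.symm)).2 hadj.symm

def letter (x : V) : TrickleMonoid T := PresentedMonoid.of T.monRels x

theorem closure_range_letter : Submonoid.closure (Set.range T.letter) = ⊤ :=
  PresentedMonoid.closure_range_of _

theorem letter_phi_mul_letter {x y : V} (hadj : T.graph.Adj x y) :
    T.letter (T.phi x y) * T.letter x = T.letter (T.phi y x) * T.letter y :=
  PresentedMonoid.mk_eq_mk_of_rel ⟨x, y, hadj, rfl, rfl⟩

theorem letter_mul_letter_rho {p q : V} (hadj : T.graph.Adj p q) :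
    T.letter p * T.letter (T.rho p q) = T.letter q * T.letter (T.rho q p) := by
  wlog hpq : ¬ p < q generalizing p q
  · exact (this hadj.symm (asymm (not_not.1 hpq))).symm
  have hrho : T.graph.Adj (T.rho p q) p := by
    simpa [T.rho_self] using (T.adj_rho_iff (Or.inr hadj) (T.inStar_self p)).2 hadj.symm
  rw [T.rho_apply_of_not_lt hpq]
  have := T.letter_phi_mul_letter hrho
  rwa [phi_rho, T.phi_apply_of_not_lt ((T.lt_rho_iff (Or.inr hadj)).not.2 hpq)] at this

def ofList (l : List V) : TrickleMonoid T := PresentedMonoid.mk T.monRels (FreeMonoid.ofList l)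

theorem ofList_cons (x : V) (l : List V) : T.ofList (x :: l) = T.letter x * T.ofList l := rfl

theorem ofList_append (l l' : List V) : T.ofList (l ++ l') = T.ofList l * T.ofList l' := by
  rw [ofList, FreeMonoid.ofList_append, map_mul]; rfl

theorem exists_ofList_eq (m : TrickleMonoid T) : ∃ l, T.ofList l = m := by
  obtain ⟨w, rfl⟩ := PresentedMonoid.surjective_mk m
  exact ⟨w.toList, by rw [ofList, FreeMonoid.ofList_toList]⟩

def RelStep (u v : List V) : Prop :=
  ∃ (s t : List V) (p q : V), T.graph.Adj p q ∧
    u = s ++ p :: T.rho p q :: t ∧ v = s ++ q :: T.rho q p :: t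

instance : Std.Symm T.RelStep where
  symm _ _ := fun ⟨s, t, p, q, hadj, hu, hv⟩ => ⟨s, t, q, p, hadj.symm, hv, hu⟩

theorem ofList_eq_of_relStep {u v : List V} (h : T.RelStep u v) : T.ofList u = T.ofList v := by
  obtain ⟨s, t, p, q, hadj, rfl, rfl⟩ := h
  simp only [ofList_append, ofList_cons, ← mul_assoc, T.letter_mul_letter_rho hadj]

def relStepCon : Con (FreeMonoid V) where
  r a b := Relation.ReflTransGen T.RelStep a.toList b.toList
  iseqv := ⟨fun _ => .refl, fun h => Std.Symm.symm _ _ h, .trans⟩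
  mul' {a b c d} hab hcd := by
    simp only [FreeMonoid.toList_mul]
    refine .trans (hab.lift (· ++ c.toList) fun u v ⟨s, t, p, q, h, hu, hv⟩ => ?_)
      (hcd.lift (b.toList ++ ·) fun u v ⟨s, t, p, q, h, hu, hv⟩ => ?_)
    · exact ⟨s, t ++ c.toList, p, q, h, by simp [hu], by simp [hv]⟩
    · exact ⟨b.toList ++ s, t, p, q, h, by simp [hu], by simp [hv]⟩

theorem ofList_eq_ofList_iff {u v : List V} :
    T.ofList u = T.ofList v ↔ Relation.ReflTransGen T.RelStep u v := by
  refine ⟨fun h => ?_, fun h => ?_⟩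
  · have hle : conGen T.monRels ≤ T.relStepCon := by
      refine Con.conGen_le.2 fun a b ⟨x, y, hadj, ha, hb⟩ => .single ⟨[], [], _, _,
        T.adj_phi_phi hadj, ?_, ?_⟩
      · rw [ha, T.rho_phi_phi]; rfl
      · rw [hb, T.rho_phi_phi]; rfl
    simpa [relStepCon] using hle (PresentedMonoid.mk_eq_mk_iff.1 h)
  · induction h with
    | refl => rfl
    | tail _ hstep ih => exact ih.trans (T.ofList_eq_of_relStep hstep)

theorem relStep_cons {y z : V} {v w : List V} (h : T.RelStep (y :: v) (z :: w)) :
    (z = y ∧ T.RelStep v w) ∨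
      (T.graph.Adj y z ∧ ∃ t, v = T.rho y z :: t ∧ w = T.rho z y :: t) := by
  obtain ⟨s, t, p, q, hadj, hu, hv⟩ := h
  cases s with
  | nil =>
    simp only [List.nil_append, List.cons.injEq] at hu hv
    obtain ⟨rfl, rfl⟩ := hu
    obtain ⟨rfl, rfl⟩ := hv
    exact Or.inr ⟨hadj, t, rfl, rfl⟩
  | cons a s =>
    simp only [List.cons_append, List.cons.injEq] at hu hv
    obtain ⟨rfl, rfl⟩ := hu
    obtain ⟨rfl, rfl⟩ := hv
    exact Or.inl ⟨rfl, s, t, p, q, hadj, rfl, rfl⟩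

def lengthHom : TrickleMonoid T →* Multiplicative ℕ :=
  PresentedMonoid.lift (fun _ => Multiplicative.ofAdd 1) fun _ _ ⟨_, _, _, hu, hv⟩ => by
    rw [hu, hv]; rfl

def len (m : TrickleMonoid T) : ℕ := (T.lengthHom m).toAdd

@[simp]
theorem len_mul (a b : TrickleMonoid T) : T.len (a * b) = T.len a + T.len b := by
  simp [len]

@[simp]
theorem len_one : T.len 1 = 0 := by simp [len]

@[simp]
theorem len_letter (x : V) : T.len (T.letter x) = 1 := rfl

@[simp]
theorem len_ofList (l : List V) : T.len (T.ofList l) = l.length := by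
  induction l with
  | nil => exact T.len_one
  | cons x l ih => simp [ofList_cons, ih, add_comm]

theorem eq_one_of_len_eq_zero {m : TrickleMonoid T} (h : T.len m = 0) : m = 1 := by
  induction m using Submonoid.induction_of_closure_eq_top_left T.closure_range_letter with
  | one => rfl
  | mul_left _ hx _ _ =>
    obtain ⟨x, rfl⟩ := hx
    simp at h

def LeviCompatible (x : V) (c : TrickleMonoid T) (y : V) (d : TrickleMonoid T) : Prop :=
  (x = y ∧ c = d) ∨
    (T.graph.Adj x y ∧ ∃ e, c = T.letter (T.rho x y) * e ∧ d = T.letter (T.rho y x) * e)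

theorem letter_rho_mul_letter_rho_rho {a b c : V} (hab : T.graph.Adj a b)
    (hac : T.graph.Adj a c) (hbc : T.graph.Adj b c) (r : TrickleMonoid T) :
    T.letter (T.rho a b) * (T.letter (T.rho (T.rho b a) (T.rho b c)) * r) =
      T.letter (T.rho a c) * (T.letter (T.rho (T.rho c a) (T.rho c b)) * r) := by
  rw [← T.rho_rho_comm hab c, ← T.rho_rho_comm hac b, ← mul_assoc, ← mul_assoc,
    T.letter_mul_letter_rho ((T.adj_rho_iff (Or.inr hab) (Or.inr hac)).2 hbc)]

theorem LeviCompatible.of_relStep {x y z : V} {c : TrickleMonoid T} {v w : List V}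
    (ih : ∀ x' y' c' d', T.len c' < T.len c → T.letter x' * c' = T.letter y' * d' →
      T.LeviCompatible x' c' y' d')
    (h : T.LeviCompatible x c y (T.ofList v)) (hs : T.RelStep (y :: v) (z :: w)) :
    T.LeviCompatible x c z (T.ofList w) := by
  rcases T.relStep_cons hs with ⟨rfl, hvw⟩ | ⟨hyz, t, rfl, rfl⟩
  · rwa [← T.ofList_eq_of_relStep hvw]
  rcases h with ⟨rfl, rfl⟩ | ⟨hxy, e, rfl, hv⟩
  · exact Or.inr ⟨hyz, T.ofList t, rfl, rfl⟩
  have ht := ih _ _ e (T.ofList t) (by simp) hv.symm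
  by_cases hzx : z = x
  · subst hzx
    rcases ht with ⟨-, rfl⟩ | ⟨hadj, -⟩
    · exact Or.inl ⟨rfl, rfl⟩
    · exact absurd hadj (SimpleGraph.irrefl _)
  -- the relations of `y` with `x` and with `z` overlap; the cube identity `rho_rho_comm`
  -- turns their overlap into a relation of `x` with `z`
  obtain ⟨hadj, r, rfl, htr⟩ := ht.resolve_left fun h => hzx (T.rho_injective y h.1).symm
  have hxz : T.graph.Adj x z := (T.adj_rho_iff (Or.inr hxy.symm) (Or.inr hyz)).1 hadj
  refine Or.inr ⟨hxz, T.letter (T.rho (T.rho z x) (T.rho z y)) * r, ?_, ?_⟩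
  · exact T.letter_rho_mul_letter_rho_rho hxy hxz hyz r
  · rw [ofList_cons, htr, T.letter_rho_mul_letter_rho_rho hyz.symm hxz.symm hxy.symm r,
      T.rho_rho_comm hxz y]

theorem leviCompatible_of_letter_mul_eq {x y : V} {c d : TrickleMonoid T}
    (h : T.letter x * c = T.letter y * d) : T.LeviCompatible x c y d := by
  induction hn : T.len c using Nat.strong_induction_on generalizing x y c d with
  | _ n ih =>
    obtain ⟨u, rfl⟩ := T.exists_ofList_eq c
    obtain ⟨v, rfl⟩ := T.exists_ofList_eq d
    have hchain := (T.ofList_eq_ofList_iff (u := x :: u) (v := y :: v)).1 h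
    clear h
    generalize hw : y :: v = w at hchain
    induction hchain generalizing y v with
    | refl =>
      obtain ⟨rfl, rfl⟩ := List.cons.inj hw
      exact Or.inl ⟨rfl, rfl⟩
    | @tail b _ _ hstep ihb =>
      subst hw
      obtain ⟨y', v', rfl⟩ : ∃ y' v', b = y' :: v' := by
        obtain ⟨s, t, p, q, -, rfl, -⟩ := hstep
        cases s <;> exact ⟨_, _, rfl⟩
      exact (ihb v' rfl).of_relStep T (fun _ _ _ _ hc h => ih _ (hn ▸ hc) h rfl) hstep

theorem isLeftRegular_letter (x : V) : IsLeftRegular (T.letter x) := fun b c h => by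
  rcases T.leviCompatible_of_letter_mul_eq h with ⟨-, h⟩ | ⟨hadj, -⟩
  exacts [h, absurd hadj (SimpleGraph.irrefl _)]

instance : IsLeftCancelMul (TrickleMonoid T) where
  mul_left_cancel a := by
    induction a using Submonoid.induction_of_closure_eq_top_left T.closure_range_letter with
    | one => exact isRegular_one.left
    | mul_left _ hx a ih =>
      obtain ⟨x, rfl⟩ := hx
      exact (T.isLeftRegular_letter x).mul ih

def revHom : TrickleMonoid T →* (TrickleMonoid T.op)ᵐᵒᵖ :=
  PresentedMonoid.lift (fun x => MulOpposite.op (T.op.letter x))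
    fun _ _ ⟨x, y, hadj, hu, hv⟩ => by
      rw [hu, hv]
      simp only [map_mul, FreeMonoid.lift_eval_of, ← MulOpposite.op_mul]
      exact congrArg MulOpposite.op (T.op.letter_mul_letter_rho hadj)

@[simp]
theorem revHom_letter (x : V) : T.revHom (T.letter x) = MulOpposite.op (T.op.letter x) := rfl

theorem unop_revHom_unop_revHom (m : TrickleMonoid T) :
    (T.op.revHom (T.revHom m).unop).unop = m := by
  induction m using Submonoid.induction_of_closure_eq_top_left T.closure_range_letter with
  | one => simp only [map_one, MulOpposite.unop_one]; rfl
  | mul_left _ hx m ih =>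
    obtain ⟨x, rfl⟩ := hx
    simp only [map_mul, MulOpposite.unop_mul, revHom_letter, MulOpposite.unop_op, ih]
    rfl

/-- The inverse is `T.op.revHom`, since `T.op.op` is `T` by definition. -/
def revEquiv : TrickleMonoid T ≃* (TrickleMonoid T.op)ᵐᵒᵖ where
  toFun := T.revHom
  invFun n := (T.op.revHom n.unop).unop
  left_inv := T.unop_revHom_unop_revHom
  right_inv n := congrArg MulOpposite.op (T.op.unop_revHom_unop_revHom n.unop)
  map_mul' := map_mul T.revHom

instance : IsRightCancelMul (TrickleMonoid T) :=
  T.revEquiv.injective.isRightCancelMul _ (map_mul T.revEquiv)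

theorem letter_dvdL_of_closure_eq_top {Δ : TrickleMonoid T}
    (h : Submonoid.closure {a | DvdL a Δ} = ⊤) (x : V) : DvdL (T.letter x) Δ := by
  refine mem_of_mem_closure_of_atom (S := {a | DvdL a Δ}) (a := T.letter x)
    (fun h1 => by simpa using congrArg T.len h1) (fun b c hbc => ?_) (h ▸ Submonoid.mem_top _)
  have := congrArg T.len hbc
  rw [len_mul, len_letter] at this
  rcases Nat.add_eq_one_iff.1 this with ⟨hb, -⟩ | ⟨-, hc⟩
  exacts [Or.inl (T.eq_one_of_len_eq_zero hb), Or.inr (T.eq_one_of_len_eq_zero hc)]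

theorem adj_of_letter_dvdL {x y : V} {m : TrickleMonoid T} (hx : DvdL (T.letter x) m)
    (hy : DvdL (T.letter y) m) (hne : x ≠ y) : T.graph.Adj x y := by
  obtain ⟨c, rfl⟩ := hx
  obtain ⟨d, hd⟩ := hy
  rcases T.leviCompatible_of_letter_mul_eq hd.symm with ⟨rfl, -⟩ | ⟨hadj, -⟩
  exacts [absurd rfl hne, hadj]

theorem card_le_len (m : TrickleMonoid T) (S : Finset V)
    (hS : ∀ x ∈ S, DvdL (T.letter x) m) : S.card ≤ T.len m := by
  induction m using Submonoid.induction_of_closure_eq_top_left T.closure_range_letter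
    generalizing S with
  | one =>
    refine (Finset.card_eq_zero.2 (Finset.eq_empty_of_forall_notMem fun x hx => ?_)).le
    obtain ⟨c, hc⟩ := hS x hx
    simpa using congrArg T.len hc
  | mul_left _ hx m ih =>
    obtain ⟨x, rfl⟩ := hx
    -- by the Levi lemma, `ρ(x, ·)` maps the other letters dividing `x m` to letters dividing `m`
    have hdvd : ∀ z ∈ (S.erase x).image (T.rho x), DvdL (T.letter z) m := by
      simp only [Finset.mem_image, Finset.mem_erase]
      rintro _ ⟨y, ⟨hyx, hy⟩, rfl⟩
      obtain ⟨d, hd⟩ := hS y hy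
      rcases T.leviCompatible_of_letter_mul_eq hd.symm with ⟨rfl, -⟩ | ⟨-, e, he, -⟩
      exacts [absurd rfl hyx, ⟨e, he.symm⟩]
    have := ih _ hdvd
    rw [Finset.card_image_of_injective _ (T.rho_injective x)] at this
    have := Finset.pred_card_le_card_erase (s := S) (a := x)
    simp only [len_mul, len_letter]
    omega

theorem finite_of_forall_letter_dvdL {Δ : TrickleMonoid T} (h : ∀ x, DvdL (T.letter x) Δ) :
    Finite V := by
  by_contra hinf
  rw [not_finite_iff_infinite] at hinf
  obtain ⟨S, hS⟩ := Infinite.exists_subset_card_eq V (T.len Δ + 1)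
  have := T.card_le_len Δ S fun x _ => h x
  omega

theorem finite_setOf_dvdL [Finite V] (Δ : TrickleMonoid T) : {a | DvdL a Δ}.Finite := by
  refine ((List.finite_length_le V (T.len Δ)).image T.ofList).subset fun a ⟨c, hc⟩ => ?_
  obtain ⟨l, rfl⟩ := T.exists_ofList_eq a
  refine ⟨l, ?_, rfl⟩
  have := congrArg T.len hc
  rw [len_mul, len_ofList] at this
  exact le_self_add.trans_eq this

section Complete

variable {T} (hC : ∀ x y : V, x ≠ y → T.graph.Adj x y)
include hC

theorem exists_isLcmL_letter (x : V) (m : TrickleMonoid T) : ∃ l, IsLcmL (T.letter x) m l := by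
  induction m using Submonoid.induction_of_closure_eq_top_left T.closure_range_letter
    generalizing x with
  | one => exact ⟨T.letter x, ⟨dvdL_refl _, one_dvdL _⟩, fun _ h _ => h⟩
  | mul_left _ hy m ih =>
    obtain ⟨y, rfl⟩ := hy
    by_cases hxy : y = x
    · subst hxy
      exact ⟨T.letter y * m, ⟨dvdL_mul_right _ _, dvdL_refl _⟩, fun _ _ h => h⟩
    obtain ⟨l, hl⟩ := ih (T.rho y x)
    refine ⟨T.letter y * l, ⟨?_, hl.1.2.mul_left _⟩, fun c hxc hmc => ?_⟩
    · obtain ⟨e, rfl⟩ := hl.1.1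
      exact ⟨T.letter (T.rho x y) * e, by
        rw [← mul_assoc, T.letter_mul_letter_rho (hC x y (Ne.symm hxy)), mul_assoc]⟩
    obtain ⟨d, rfl⟩ := hmc
    obtain ⟨c', hc'⟩ := hxc
    rcases T.leviCompatible_of_letter_mul_eq (hc'.trans (mul_assoc _ _ _)) with
      ⟨h, -⟩ | ⟨-, e, -, he⟩
    · exact absurd h.symm hxy
    rw [mul_assoc]
    exact (hl.2 (m * d) ⟨e, he.symm⟩ (dvdL_mul_right _ _)).mul_left _

theorem exists_isLcmL (a b : TrickleMonoid T) : ∃ l, IsLcmL a b l :=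
  exists_isLcmL_of_closure_eq_top T.closure_range_letter
    (by rintro _ ⟨x, rfl⟩; exact exists_isLcmL_letter hC x) a b

theorem exists_isLcmR (a b : TrickleMonoid T) : ∃ l, IsLcmR a b l :=
  exists_isLcmR_of_mulEquiv_mulOpposite T.revEquiv (exists_isLcmL (T := T.op) hC) a b

theorem isPreGarsideMonoid : IsPreGarsideMonoid (TrickleMonoid T) :=
  ⟨fun _ _ _ _ h => mul_left_cancel (mul_right_cancel h),
    ⟨T.len, fun _ => ⟨T.eq_one_of_len_eq_zero, by rintro rfl; exact T.len_one⟩,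
      fun a b => (T.len_mul a b).ge⟩,
    fun a b _ => exists_isLcmL hC a b, fun a b _ => exists_isLcmR hC a b⟩

theorem dvdL_letter_mul {Δ : TrickleMonoid T} (hΔ : ∀ y, DvdL (T.letter y) Δ) (x y : V) :
    DvdL (T.letter y) (T.letter x * Δ) := by
  by_cases hxy : y = x
  · exact hxy ▸ dvdL_mul_right _ _
  obtain ⟨e, he⟩ := hΔ (T.rho x y)
  refine ⟨T.letter (T.rho y x) * e, ?_⟩
  rw [← mul_assoc, T.letter_mul_letter_rho (hC y x hxy), mul_assoc, he]

theorem isGarsideElement_of_lcm_letters [Finite V] {Δ : TrickleMonoid T}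
    (hΔ : ∀ x, DvdL (T.letter x) Δ)
    (hleast : ∀ c, (∀ x, DvdL (T.letter x) c) → DvdL Δ c) : IsGarsideElement Δ := by
  have hRL : {a | DvdR a Δ} ⊆ {a | DvdL a Δ} := fun a =>
    dvdL_of_dvdR_of_closure_eq_top T.closure_range_letter
      (by rintro _ ⟨x, rfl⟩; exact hleast _ (dvdL_letter_mul hC hΔ x))
  refine ⟨setOf_dvdL_eq_setOf_dvdR (T.finite_setOf_dvdL Δ) hRL, ?_⟩
  rw [eq_top_iff, ← T.closure_range_letter]
  exact Submonoid.closure_mono (Set.range_subset_iff.2 hΔ)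

theorem isGarsideMonoid_of_complete [Finite V] : IsGarsideMonoid (TrickleMonoid T) := by
  obtain ⟨Δ, hΔ, hleast⟩ :=
    exists_isLcmL_of_finite (exists_isLcmL hC) (Set.finite_range T.letter)
  refine ⟨isPreGarsideMonoid hC, Δ,
    isGarsideElement_of_lcm_letters hC (fun x => hΔ _ ⟨x, rfl⟩) fun c hc => hleast c ?_⟩
  rintro _ ⟨x, rfl⟩
  exact hc x

end Complete

end TrickleGraph

theorem TrickleMonoid.isGarside_iff_general {V : Type u} [PartialOrder V] (T : TrickleGraph V) :
    IsGarsideMonoid (TrickleMonoid T) ↔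
      (Finite V ∧ ∀ x y : V, x ≠ y → T.graph.Adj x y) := by
  constructor
  · rintro ⟨-, Δ, -, hgen⟩
    have hΔ := T.letter_dvdL_of_closure_eq_top hgen
    exact ⟨T.finite_of_forall_letter_dvdL hΔ, fun x y => T.adj_of_letter_dvdL (hΔ x) (hΔ y)⟩
  · rintro ⟨_, hC⟩
    exact TrickleGraph.isGarsideMonoid_of_complete hC

/-- **Theorem 2.15.** For a preGarside trickle graph `Γ` (i.e. `mu x = ∞` for every vertex),
the preGarside trickle monoid `Tr⁺(Γ)` is a Garside monoid if and only if the vertex set is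
finite and the graph is complete. -/
theorem TrickleMonoid.isGarside_iff {V : Type u} [PartialOrder V] (T : TrickleGraph V)
    (hmu : ∀ x : V, T.mu x = ⊤) :
    IsGarsideMonoid (TrickleMonoid T) ↔
      (Finite V ∧ ∀ x y : V, x ≠ y → T.graph.Adj x y) :=
  TrickleMonoid.isGarside_iff_general T
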